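/- For every 1 ≤ i ≤ d, E[λ_i X (Yᵀ)_{:,i} Y_{i,:} Xᵀ − X (Yᵀ)_{:,i} (Ŵ_D)_{i,:}] = 0 (the d×d zero matrix). -/

import Mathlib

/-!
Put the three Gaussian matrices on the canonical product space of their coordinates. For a signed
permutation matrix `P`, the map `(X, W, ε) ↦ (P X, W Pᵀ, ε)` preserves the law and fixes
`Y = W X + ε`, while the ridge matrix becomes `Ŵ_D Pᵀ`; so the random matrix
`M = λ v vᵀ - v ŵᵀ` (with `v = X Yᵢᵀ` and `ŵ` the `i`-th row of `Ŵ_D`) becomes `P M Pᵀ`.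
Flipping the sign of one feature shows that the off-diagonal entries of `E[M]` vanish, and
permuting features shows that its diagonal entries are all equal. Their sum is
`E[tr M] = λ E[|v|²] - E[ŵ · v] = 0` by the choice of `λ`.
-/

open MeasureTheory ProbabilityTheory Matrix
open scoped NNReal

noncomputable section

section Algebra
variable {m n : Type*} [Fintype m] [Fintype n] [DecidableEq m]

theorem diagonal_mem_orthogonalGroup {s : m → ℝ} (hs : ∀ a, s a ^ 2 = 1) :
    diagonal s ∈ orthogonalGroup m ℝ := by
  rw [mem_orthogonalGroup_iff, diagonal_transpose, diagonal_mul_diagonal, ← diagonal_one]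
  exact congrArg diagonal (funext fun a => by rw [← sq, hs])

theorem permMatrix_mem_orthogonalGroup (τ : Equiv.Perm m) :
    τ.permMatrix ℝ ∈ orthogonalGroup m ℝ := by
  rw [mem_orthogonalGroup_iff, transpose_permMatrix, ← permMatrix_mul, inv_mul_cancel,
    permMatrix_one]

theorem permMatrix_mul_mul_transpose_apply (τ : Equiv.Perm m) (A : Matrix m m ℝ) (a b : m) :
    (τ.permMatrix ℝ * A * (τ.permMatrix ℝ)ᵀ) a b = A (τ a) (τ b) := by
  rw [transpose_permMatrix, PEquiv.toMatrix_toPEquiv_mul, Equiv.Perm.permMatrix,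
    PEquiv.mul_toMatrix_toPEquiv]
  rfl

def ridge (σ : ℝ) (X Y : Matrix m n ℝ) : Matrix m m ℝ :=
  Y * Xᵀ * (X * Xᵀ + σ ^ 2 • 1)⁻¹

theorem ridge_orthogonal_mul {P : Matrix m m ℝ} (hP : P ∈ orthogonalGroup m ℝ)
    (σ : ℝ) (X Y : Matrix m n ℝ) : ridge σ (P * X) Y = ridge σ X Y * Pᵀ := by
  have hPPt : P * Pᵀ = 1 := (mem_orthogonalGroup_iff m ℝ).mp hP
  have hPtP : Pᵀ * P = 1 := (mem_orthogonalGroup_iff' m ℝ).mp hP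
  have hconj : P * X * (P * X)ᵀ + σ ^ 2 • 1 = P * (X * Xᵀ + σ ^ 2 • 1) * Pᵀ := by
    rw [Matrix.mul_add, Matrix.add_mul, Matrix.mul_smul, Matrix.smul_mul, Matrix.mul_one, hPPt,
      transpose_mul]
    simp only [Matrix.mul_assoc]
  rw [ridge, ridge, hconj, Matrix.mul_inv_rev, Matrix.mul_inv_rev, inv_eq_right_inv hPPt,
    inv_eq_left_inv hPPt, transpose_mul]
  simp only [Matrix.mul_assoc]
  rw [← Matrix.mul_assoc Pᵀ P, hPtP, Matrix.one_mul]

def ridgeMoment (σ c : ℝ) (X Y : Matrix m n ℝ) (i : m) : Matrix m m ℝ :=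
  c • vecMulVec (X *ᵥ Y i) (X *ᵥ Y i) - vecMulVec (X *ᵥ Y i) (ridge σ X Y i)

theorem ridgeMoment_orthogonal_mul {P : Matrix m m ℝ} (hP : P ∈ orthogonalGroup m ℝ)
    (σ c : ℝ) (X Y : Matrix m n ℝ) (i : m) :
    ridgeMoment σ c (P * X) Y i = P * ridgeMoment σ c X Y i * Pᵀ := by
  have hrow : ridge σ (P * X) Y i = P *ᵥ ridge σ X Y i := by
    rw [ridge_orthogonal_mul hP, ← vecMul_transpose]; rfl
  simp only [ridgeMoment, hrow, ← mulVec_mulVec, Matrix.mul_sub, Matrix.sub_mul, Matrix.mul_smul,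
    Matrix.smul_mul, mul_vecMulVec, vecMulVec_mul, vecMul_transpose]

theorem trace_ridgeMoment (σ c : ℝ) (X Y : Matrix m n ℝ) (i : m) :
    trace (ridgeMoment σ c X Y i)
      = c * (Y i ⬝ᵥ ((Xᵀ * X) *ᵥ Y i)) - ridge σ X Y i ⬝ᵥ (X *ᵥ Y i) := by
  rw [ridgeMoment, trace_sub, trace_smul, trace_vecMulVec, trace_vecMulVec, smul_eq_mul,
    ← mulVec_mulVec, dotProduct_mulVec (Y i) Xᵀ, vecMul_transpose,
    dotProduct_comm (X *ᵥ Y i) (ridge σ X Y i)]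

end Algebra

section Measurability
variable {α m n : Type*} [MeasurableSpace α] [Fintype m] [Fintype n]

theorem measurable_det_of_measurable_apply [DecidableEq m] {f : α → Matrix m m ℝ}
    (hf : ∀ a b, Measurable fun x => f x a b) : Measurable fun x => (f x).det := by
  simp only [det_apply]
  fun_prop

theorem measurable_inv_apply_of_measurable_apply [DecidableEq m] {f : α → Matrix m m ℝ}
    (hf : ∀ a b, Measurable fun x => f x a b) (a b : m) :
    Measurable fun x => (f x)⁻¹ a b := by
  have hadj : Measurable fun x => (f x).adjugate a b := by
    simp only [adjugate_apply]
    refine measurable_det_of_measurable_apply fun a' b' => ?_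
    by_cases h : a' = b <;> simp [updateRow_apply, h, hf]
  simp only [inv_def, Matrix.smul_apply, smul_eq_mul, Ring.inverse_eq_inv']
  exact (measurable_det_of_measurable_apply hf).inv.mul hadj

variable {X Y : α → Matrix m n ℝ}

theorem measurable_dotProduct_gram_mulVec (hX : ∀ a b, Measurable fun x => X x a b)
    (hY : ∀ a b, Measurable fun x => Y x a b) (i : m) :
    Measurable fun x => Y x i ⬝ᵥ (((X x)ᵀ * X x) *ᵥ Y x i) := by
  simp only [dotProduct, mulVec, mul_apply, transpose_apply]
  fun_prop

variable [DecidableEq m]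

theorem measurable_ridge_apply (hX : ∀ a b, Measurable fun x => X x a b)
    (hY : ∀ a b, Measurable fun x => Y x a b) (σ : ℝ) (a b : m) :
    Measurable fun x => ridge σ (X x) (Y x) a b := by
  have hinv := measurable_inv_apply_of_measurable_apply (f := fun x => X x * (X x)ᵀ + σ ^ 2 • 1)
    fun a b => by
      simp only [Matrix.add_apply, mul_apply, transpose_apply, Matrix.smul_apply]
      fun_prop
  simp only [ridge, mul_apply, transpose_apply]
  exact Finset.measurable_sum _ fun j _ =>
    (Finset.measurable_sum _ fun k _ => (hY a k).mul (hX j k)).mul (hinv j b)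

theorem measurable_ridge_dotProduct_mulVec (hX : ∀ a b, Measurable fun x => X x a b)
    (hY : ∀ a b, Measurable fun x => Y x a b) (σ : ℝ) (i : m) :
    Measurable fun x => ridge σ (X x) (Y x) i ⬝ᵥ (X x *ᵥ Y x i) := by
  have := measurable_ridge_apply hX hY σ i
  simp only [dotProduct, mulVec]
  fun_prop

theorem measurable_ridgeMoment_apply (hX : ∀ a b, Measurable fun x => X x a b)
    (hY : ∀ a b, Measurable fun x => Y x a b) (σ c : ℝ) (i k l : m) :
    Measurable fun x => ridgeMoment σ c (X x) (Y x) i k l := by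
  have := measurable_ridge_apply hX hY σ i l
  simp only [ridgeMoment, Matrix.sub_apply, Matrix.smul_apply, vecMulVec_apply, mulVec,
    dotProduct, smul_eq_mul]
  fun_prop

end Measurability

theorem integral_trace_ridgeMoment_eq_zero {Ω m n : Type*} [Fintype m] [Fintype n]
    [DecidableEq m] [MeasurableSpace Ω] {μ : Measure Ω} {X Y : Ω → Matrix m n ℝ} {σ c : ℝ}
    {i : m} (hden : ∫ ω, Y ω i ⬝ᵥ (((X ω)ᵀ * X ω) *ᵥ Y ω i) ∂μ ≠ 0)
    (hc : c = (∫ ω, ridge σ (X ω) (Y ω) i ⬝ᵥ (X ω *ᵥ Y ω i) ∂μ)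
      / ∫ ω, Y ω i ⬝ᵥ (((X ω)ᵀ * X ω) *ᵥ Y ω i) ∂μ)
    (htr : Integrable (fun ω => trace (ridgeMoment σ c (X ω) (Y ω) i)) μ) :
    ∫ ω, trace (ridgeMoment σ c (X ω) (Y ω) i) ∂μ = 0 := by
  have hD : Integrable (fun ω => Y ω i ⬝ᵥ (((X ω)ᵀ * X ω) *ᵥ Y ω i)) μ := by
    by_contra h
    exact hden (integral_undef h)
  have hN : Integrable (fun ω => ridge σ (X ω) (Y ω) i ⬝ᵥ (X ω *ᵥ Y ω i)) μ := by
    refine ((hD.const_mul c).sub htr).congr (ae_of_all _ fun ω => ?_)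
    simp only [Pi.sub_apply, trace_ridgeMoment]
    ring
  simp only [trace_ridgeMoment]
  rw [integral_sub (hD.const_mul c) hN, integral_const_mul, hc, div_mul_cancel₀ _ hden, sub_self]

section Model
variable {d n : ℕ}

abbrev ModelCoord (d n : ℕ) : Type := (Fin d × Fin n) ⊕ (Fin d × Fin d) ⊕ (Fin d × Fin n)

def encodeModel (X : Matrix (Fin d) (Fin n) ℝ) (W : Matrix (Fin d) (Fin d) ℝ)
    (ε : Matrix (Fin d) (Fin n) ℝ) : ModelCoord d n → ℝ :=
  Sum.elim (fun q => X q.1 q.2) (Sum.elim (fun q => W q.1 q.2) fun q => ε q.1 q.2)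

def modelX (x : ModelCoord d n → ℝ) : Matrix (Fin d) (Fin n) ℝ := of fun a b => x (.inl (a, b))

def modelW (x : ModelCoord d n → ℝ) : Matrix (Fin d) (Fin d) ℝ :=
  of fun a b => x (.inr (.inl (a, b)))

def modelNoise (x : ModelCoord d n → ℝ) : Matrix (Fin d) (Fin n) ℝ :=
  of fun a b => x (.inr (.inr (a, b)))

def modelY (x : ModelCoord d n → ℝ) : Matrix (Fin d) (Fin n) ℝ :=
  modelW x * modelX x + modelNoise x

def modelMoment (σ c : ℝ) (i : Fin d) (x : ModelCoord d n → ℝ) : Matrix (Fin d) (Fin d) ℝ :=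
  ridgeMoment σ c (modelX x) (modelY x) i

def rotateFeatures (P : Matrix (Fin d) (Fin d) ℝ) (x : ModelCoord d n → ℝ) :
    ModelCoord d n → ℝ :=
  encodeModel (P * modelX x) (modelW x * Pᵀ) (modelNoise x)

theorem measurable_modelX_apply (a : Fin d) (b : Fin n) :
    Measurable fun x : ModelCoord d n → ℝ => modelX x a b :=
  measurable_pi_apply _

theorem measurable_modelY_apply (a : Fin d) (b : Fin n) :
    Measurable fun x : ModelCoord d n → ℝ => modelY x a b := by
  simp only [modelY, modelW, modelX, modelNoise, Matrix.add_apply, mul_apply, of_apply]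
  fun_prop

theorem measurable_modelMoment_apply (σ c : ℝ) (i k l : Fin d) :
    Measurable fun x : ModelCoord d n → ℝ => modelMoment σ c i x k l :=
  measurable_ridgeMoment_apply measurable_modelX_apply measurable_modelY_apply σ c i k l

theorem modelY_rotateFeatures {P : Matrix (Fin d) (Fin d) ℝ}
    (hP : P ∈ orthogonalGroup (Fin d) ℝ) (x : ModelCoord d n → ℝ) :
    modelY (rotateFeatures P x) = modelY x := by
  change modelW x * Pᵀ * (P * modelX x) + modelNoise x = modelY x
  rw [Matrix.mul_assoc, ← Matrix.mul_assoc Pᵀ, (mem_orthogonalGroup_iff' _ ℝ).mp hP,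
    Matrix.one_mul, modelY]

theorem modelMoment_rotateFeatures {P : Matrix (Fin d) (Fin d) ℝ}
    (hP : P ∈ orthogonalGroup (Fin d) ℝ) (σ c : ℝ) (i : Fin d) (x : ModelCoord d n → ℝ) :
    modelMoment σ c i (rotateFeatures P x) = P * modelMoment σ c i x * Pᵀ := by
  rw [modelMoment, modelY_rotateFeatures hP]
  exact ridgeMoment_orthogonal_mul hP σ c (modelX x) (modelY x) i

theorem modelMoment_rotateFeatures_permMatrix_apply (σ c : ℝ) (i : Fin d)
    (τ : Equiv.Perm (Fin d)) (x : ModelCoord d n → ℝ) (a b : Fin d) :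
    modelMoment σ c i (rotateFeatures (τ.permMatrix ℝ) x) a b
      = modelMoment σ c i x (τ a) (τ b) := by
  rw [modelMoment_rotateFeatures (permMatrix_mem_orthogonalGroup τ),
    permMatrix_mul_mul_transpose_apply]

theorem modelMoment_rotateFeatures_diagonal_apply (σ c : ℝ) (i : Fin d) {s : Fin d → ℝ}
    (hs : ∀ a, s a ^ 2 = 1) (x : ModelCoord d n → ℝ) (a b : Fin d) :
    modelMoment σ c i (rotateFeatures (diagonal s) x) a b
      = s a * s b * modelMoment σ c i x a b := by
  rw [modelMoment_rotateFeatures (diagonal_mem_orthogonalGroup hs), diagonal_transpose,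
    mul_diagonal, diagonal_mul]
  ring

end Model

section Symmetry
variable {d n : ℕ} {μ : Measure (ModelCoord d n → ℝ)} {σ c : ℝ} {i : Fin d}

theorem integral_modelMoment_rotateFeatures_apply {P : Matrix (Fin d) (Fin d) ℝ}
    (hμ : MeasurePreserving (rotateFeatures P) μ μ) (k l : Fin d) :
    ∫ x, modelMoment σ c i (rotateFeatures P x) k l ∂μ = ∫ x, modelMoment σ c i x k l ∂μ := by
  have hg := (measurable_modelMoment_apply σ c i k l).aestronglyMeasurable (μ := μ)
  rw [← hμ.map_eq] at hg
  conv_rhs => rw [← hμ.map_eq, integral_map hμ.measurable.aemeasurable hg]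

theorem integral_modelMoment_apply_of_ne
    (hsign : ∀ s : Fin d → ℝ, (∀ a, s a ^ 2 = 1) →
      MeasurePreserving (rotateFeatures (diagonal s)) μ μ)
    {k l : Fin d} (hkl : k ≠ l) : ∫ x, modelMoment σ c i x k l ∂μ = 0 := by
  set s : Fin d → ℝ := fun a => if a = k then -1 else 1
  have hs : ∀ a, s a ^ 2 = 1 := fun a => by by_cases h : a = k <;> simp [s, h]
  have hflip := integral_modelMoment_rotateFeatures_apply (σ := σ) (c := c) (i := i)
    (hsign s hs) k l
  simp only [modelMoment_rotateFeatures_diagonal_apply σ c i hs, s, if_pos rfl,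
    if_neg hkl.symm, mul_one, neg_one_mul, integral_neg] at hflip
  linarith

theorem integral_modelMoment_apply_self
    (hperm : ∀ τ : Equiv.Perm (Fin d), MeasurePreserving (rotateFeatures (τ.permMatrix ℝ)) μ μ)
    (hden : ∫ x, modelY x i ⬝ᵥ (((modelX x)ᵀ * modelX x) *ᵥ modelY x i) ∂μ ≠ 0)
    (hc : c = (∫ x, ridge σ (modelX x) (modelY x) i ⬝ᵥ (modelX x *ᵥ modelY x i) ∂μ)
      / ∫ x, modelY x i ⬝ᵥ (((modelX x)ᵀ * modelX x) *ᵥ modelY x i) ∂μ)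
    (k : Fin d) : ∫ x, modelMoment σ c i x k k ∂μ = 0 := by
  have hswap (l : Fin d) (x : ModelCoord d n → ℝ) :
      modelMoment σ c i (rotateFeatures ((Equiv.swap k l).permMatrix ℝ) x) k k
        = modelMoment σ c i x l l := by
    rw [modelMoment_rotateFeatures_permMatrix_apply, Equiv.swap_apply_left]
  by_cases hint : Integrable (fun x => modelMoment σ c i x k k) μ
  swap
  -- a non-integrable function has Bochner integral `0`
  · exact integral_undef hint
  have hint_diag (l : Fin d) : Integrable (fun x => modelMoment σ c i x l l) μ := by
    simpa only [Function.comp_def, hswap] using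
      (hperm (Equiv.swap k l)).integrable_comp_of_integrable hint
  have hdiag (l : Fin d) :
      ∫ x, modelMoment σ c i x l l ∂μ = ∫ x, modelMoment σ c i x k k ∂μ := by
    simp_rw [← hswap l, integral_modelMoment_rotateFeatures_apply (hperm _)]
  have htrace := integral_trace_ridgeMoment_eq_zero hden hc
    (integrable_finsetSum _ fun l _ => hint_diag l)
  change ∫ x, ∑ l, modelMoment σ c i x l l ∂μ = 0 at htrace
  rw [integral_finsetSum _ fun l _ => hint_diag l] at htrace
  simp only [hdiag, Finset.sum_const, Finset.card_univ, Fintype.card_fin, nsmul_eq_mul] at htrace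
  exact (mul_eq_zero.mp htrace).resolve_left (Nat.cast_ne_zero.mpr (Fin.pos k).ne')

end Symmetry

section Gaussian

theorem measurePreserving_comp_equiv {ι α : Type*} [Fintype ι] [MeasurableSpace α]
    (μ : ι → Measure α) [∀ i, SigmaFinite (μ i)] (e : ι ≃ ι) (he : ∀ i, μ (e i) = μ i) :
    MeasurePreserving (fun x : ι → α => x ∘ e) (Measure.pi μ) (Measure.pi μ) := by
  have h := measurePreserving_piCongrLeft (α := fun _ => α) μ e.symm
  have hμ : (fun i => μ (e.symm i)) = μ := funext fun i => by rw [← he, e.apply_symm_apply]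
  have hcoe : ⇑(MeasurableEquiv.piCongrLeft (fun _ => α) e.symm) = fun x => x ∘ e := by
    funext x i
    rw [← e.symm_apply_apply i, MeasurableEquiv.piCongrLeft_apply_apply]
    simp
  rwa [hμ, hcoe] at h

theorem measurePreserving_gaussianReal_const_mul {c : ℝ} (hc : c ^ 2 = 1) (v : ℝ≥0) :
    MeasurePreserving (c * ·) (gaussianReal 0 v) (gaussianReal 0 v) := by
  refine ⟨measurable_const_mul c, ?_⟩
  rw [gaussianReal_map_const_mul, mul_zero]
  congr
  ext
  simp [hc]

variable {d n : ℕ}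

def modelLaw (d n : ℕ) (σ : ℝ) : ModelCoord d n → Measure ℝ :=
  Sum.elim (fun _ => gaussianReal 0 1)
    (Sum.elim (fun _ => gaussianReal 0 1) fun _ => gaussianReal 0 ⟨σ ^ 2, sq_nonneg σ⟩)

instance (σ : ℝ) (j : ModelCoord d n) : IsProbabilityMeasure (modelLaw d n σ j) := by
  rcases j with _ | _ | _ <;> exact instIsProbabilityMeasureGaussianReal _ _

def permuteCoord (τ : Equiv.Perm (Fin d)) : ModelCoord d n ≃ ModelCoord d n :=
  Equiv.sumCongr (Equiv.prodCongr τ (Equiv.refl _))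
    (Equiv.sumCongr (Equiv.prodCongr (Equiv.refl _) τ) (Equiv.refl _))

theorem rotateFeatures_permMatrix (τ : Equiv.Perm (Fin d)) (x : ModelCoord d n → ℝ) :
    rotateFeatures (τ.permMatrix ℝ) x = x ∘ permuteCoord τ := by
  funext j
  rcases j with ⟨a, b⟩ | ⟨a, b⟩ | ⟨a, b⟩
  · change (τ.permMatrix ℝ * modelX x) a b = x (.inl (τ a, b))
    rw [Equiv.Perm.permMatrix, PEquiv.toMatrix_toPEquiv_mul]
    rfl
  · change (modelW x * (τ.permMatrix ℝ)ᵀ) a b = x (.inr (.inl (a, τ b)))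
    rw [transpose_permMatrix, Equiv.Perm.permMatrix, PEquiv.mul_toMatrix_toPEquiv]
    rfl
  · rfl

theorem measurePreserving_rotateFeatures_permMatrix (σ : ℝ) (τ : Equiv.Perm (Fin d)) :
    MeasurePreserving (rotateFeatures (n := n) (τ.permMatrix ℝ))
      (Measure.pi (modelLaw d n σ)) (Measure.pi (modelLaw d n σ)) := by
  simp_rw [funext (rotateFeatures_permMatrix τ)]
  exact measurePreserving_comp_equiv _ _ fun j => by rcases j with _ | _ | _ <;> rfl

def signCoord (s : Fin d → ℝ) : ModelCoord d n → ℝ :=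
  Sum.elim (fun q => s q.1) (Sum.elim (fun q => s q.2) fun _ => 1)

theorem rotateFeatures_diagonal (s : Fin d → ℝ) (x : ModelCoord d n → ℝ) :
    rotateFeatures (diagonal s) x = fun j => signCoord s j * x j := by
  funext j
  rcases j with ⟨a, b⟩ | ⟨a, b⟩ | ⟨a, b⟩
  · change (diagonal s * modelX x) a b = s a * x (.inl (a, b))
    rw [diagonal_mul]
    rfl
  · change (modelW x * (diagonal s)ᵀ) a b = s b * x (.inr (.inl (a, b)))
    rw [diagonal_transpose, mul_diagonal, mul_comm]
    rfl
  · exact (one_mul _).symm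

theorem measurePreserving_rotateFeatures_diagonal (σ : ℝ) {s : Fin d → ℝ}
    (hs : ∀ a, s a ^ 2 = 1) :
    MeasurePreserving (rotateFeatures (n := n) (diagonal s))
      (Measure.pi (modelLaw d n σ)) (Measure.pi (modelLaw d n σ)) := by
  simp_rw [funext (rotateFeatures_diagonal s)]
  refine measurePreserving_pi _ _ fun j => ?_
  rcases j with ⟨a, b⟩ | ⟨a, b⟩ | _
  exacts [measurePreserving_gaussianReal_const_mul (hs a) 1,
    measurePreserving_gaussianReal_const_mul (hs b) 1,
    measurePreserving_gaussianReal_const_mul (one_pow 2) _]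

theorem measurable_encodeModel {Ω : Type*} [MeasurableSpace Ω] {d n : ℕ}
    {X ε : Ω → Matrix (Fin d) (Fin n) ℝ} {W : Ω → Matrix (Fin d) (Fin d) ℝ}
    (hmX : ∀ a b, Measurable fun ω => X ω a b) (hmW : ∀ a b, Measurable fun ω => W ω a b)
    (hmε : ∀ a b, Measurable fun ω => ε ω a b) :
    Measurable fun ω => encodeModel (X ω) (W ω) (ε ω) :=
  measurable_pi_lambda _ fun j => by
    rcases j with ⟨a, b⟩ | ⟨a, b⟩ | ⟨a, b⟩
    exacts [hmX a b, hmW a b, hmε a b]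

theorem map_encodeModel_eq_pi {Ω : Type*} [MeasurableSpace Ω] {P : Measure Ω} {d n : ℕ}
    {σ : ℝ} {X ε : Ω → Matrix (Fin d) (Fin n) ℝ} {W : Ω → Matrix (Fin d) (Fin d) ℝ}
    (hmX : ∀ a b, Measurable fun ω => X ω a b) (hmW : ∀ a b, Measurable fun ω => W ω a b)
    (hmε : ∀ a b, Measurable fun ω => ε ω a b)
    (hindep : iIndepFun
      (Sum.elim (fun q : Fin d × Fin n => fun ω => X ω q.1 q.2)
        (Sum.elim (fun q : Fin d × Fin d => fun ω => W ω q.1 q.2)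
          (fun q : Fin d × Fin n => fun ω => ε ω q.1 q.2))) P)
    (hlawX : ∀ a b, P.map (fun ω => X ω a b) = gaussianReal 0 1)
    (hlawW : ∀ a b, P.map (fun ω => W ω a b) = gaussianReal 0 1)
    (hlawε : ∀ a b, P.map (fun ω => ε ω a b) = gaussianReal 0 ⟨σ ^ 2, sq_nonneg σ⟩) :
    P.map (fun ω => encodeModel (X ω) (W ω) (ε ω)) = Measure.pi (modelLaw d n σ) := by
  have hfun : (fun ω => encodeModel (X ω) (W ω) (ε ω)) = fun ω j =>
      Sum.elim (fun q : Fin d × Fin n => fun ω => X ω q.1 q.2)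
        (Sum.elim (fun q : Fin d × Fin d => fun ω => W ω q.1 q.2)
          (fun q : Fin d × Fin n => fun ω => ε ω q.1 q.2)) j ω := by
    funext ω j
    rcases j with _ | _ | _ <;> rfl
  have hmeas := measurable_encodeModel hmX hmW hmε
  rw [hfun] at hmeas ⊢
  refine (hindep.map_fun_eq_pi_map ?_).trans (congrArg Measure.pi (funext fun j => ?_))
  · exact fun j => ((measurable_pi_apply j).comp hmeas).aemeasurable
  rcases j with ⟨a, b⟩ | ⟨a, b⟩ | ⟨a, b⟩
  exacts [hlawX a b, hlawW a b, hlawε a b]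

end Gaussian

theorem stmt_5_general (d n : ℕ) (σ : ℝ)
    (Ω : Type) [MeasureSpace Ω]
    (X : Ω → Matrix (Fin d) (Fin n) ℝ)
    (W : Ω → Matrix (Fin d) (Fin d) ℝ)
    (ε : Ω → Matrix (Fin d) (Fin n) ℝ)
    (hmX : ∀ i j, Measurable fun ω => X ω i j)
    (hmW : ∀ i j, Measurable fun ω => W ω i j)
    (hmε : ∀ i j, Measurable fun ω => ε ω i j)
    (hindep : iIndepFun
      (Sum.elim (fun q : Fin d × Fin n => fun ω => X ω q.1 q.2)
        (Sum.elim (fun q : Fin d × Fin d => fun ω => W ω q.1 q.2)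
          (fun q : Fin d × Fin n => fun ω => ε ω q.1 q.2))) ℙ)
    (hlawX : ∀ i j, Measure.map (fun ω => X ω i j) ℙ = gaussianReal 0 1)
    (hlawW : ∀ i j, Measure.map (fun ω => W ω i j) ℙ = gaussianReal 0 1)
    (hlawε : ∀ i j, Measure.map (fun ω => ε ω i j) ℙ = gaussianReal 0 ⟨σ ^ 2, sq_nonneg σ⟩)
    (Y : Ω → Matrix (Fin d) (Fin n) ℝ) (hY : ∀ ω, Y ω = W ω * X ω + ε ω)
    (What : Ω → Matrix (Fin d) (Fin d) ℝ)
    (hWhat : ∀ ω, What ω =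
      Y ω * (X ω)ᵀ * (X ω * (X ω)ᵀ + σ ^ 2 • (1 : Matrix (Fin d) (Fin d) ℝ))⁻¹)
    (lam : Fin d → ℝ)
    (hden : ∀ i : Fin d, (∫ ω, Y ω i ⬝ᵥ (((X ω)ᵀ * X ω) *ᵥ Y ω i)) ≠ 0)
    (hlam : ∀ i : Fin d, lam i =
      (∫ ω, What ω i ⬝ᵥ (X ω *ᵥ Y ω i)) / (∫ ω, Y ω i ⬝ᵥ (((X ω)ᵀ * X ω) *ᵥ Y ω i)))
    :
    ∀ i : Fin d,
      (Matrix.of fun k l => ∫ ω,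
          (lam i * ((X ω *ᵥ Y ω i) k * (X ω *ᵥ Y ω i) l)
            - (X ω *ᵥ Y ω i) k * What ω i l))
        = (0 : Matrix (Fin d) (Fin d) ℝ) := by
  intro i
  let Φ : Ω → ModelCoord d n → ℝ := fun ω => encodeModel (X ω) (W ω) (ε ω)
  have hΦ : Measurable Φ := measurable_encodeModel hmX hmW hmε
  have htransfer {g : (ModelCoord d n → ℝ) → ℝ} (hg : Measurable g) :
      ∫ ω, g (Φ ω) = ∫ x, g x ∂Measure.pi (modelLaw d n σ) := by
    rw [← map_encodeModel_eq_pi hmX hmW hmε hindep hlawX hlawW hlawε,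
      integral_map hΦ.aemeasurable hg.aestronglyMeasurable]
  have hXΦ (ω : Ω) : modelX (Φ ω) = X ω := rfl
  have hYΦ (ω : Ω) : modelY (Φ ω) = Y ω := (hY ω).symm
  have hWhat' (ω : Ω) : ridge σ (X ω) (Y ω) = What ω := (hWhat ω).symm
  have hX := measurable_modelX_apply (d := d) (n := n)
  have hY := measurable_modelY_apply (d := d) (n := n)
  have hden' := hden i
  have hlam' := hlam i
  simp only [← hWhat', ← hXΦ, ← hYΦ, htransfer (measurable_dotProduct_gram_mulVec hX hY i),
    htransfer (measurable_ridge_dotProduct_mulVec hX hY σ i)] at hden' hlam'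
  ext k l
  simp_rw [of_apply, Matrix.zero_apply, ← hWhat', ← hYΦ, ← hXΦ]
  change ∫ ω, modelMoment σ (lam i) i (Φ ω) k l = 0
  rw [htransfer (measurable_modelMoment_apply σ (lam i) i k l)]
  rcases eq_or_ne k l with rfl | hkl
  · exact integral_modelMoment_apply_self (measurePreserving_rotateFeatures_permMatrix σ) hden'
      hlam' k
  · exact integral_modelMoment_apply_of_ne
      (fun _ hs => measurePreserving_rotateFeatures_diagonal σ hs) hkl

/-- For every `i`,
`E[λ_i X (Yᵀ)_{:,i} Y_{i,:} Xᵀ − X (Yᵀ)_{:,i} (Ŵ_D)_{i,:}] = 0`. -/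
theorem stmt_5 (d n : ℕ) (hd : 1 ≤ d) (hn : 1 ≤ n) (σ : ℝ) (hσ : 0 < σ)
    (Ω : Type) [MeasureSpace Ω] [IsProbabilityMeasure (ℙ : Measure Ω)]
    (X : Ω → Matrix (Fin d) (Fin n) ℝ)
    (W : Ω → Matrix (Fin d) (Fin d) ℝ)
    (ε : Ω → Matrix (Fin d) (Fin n) ℝ)
    (hmX : ∀ i j, Measurable fun ω => X ω i j)
    (hmW : ∀ i j, Measurable fun ω => W ω i j)
    (hmε : ∀ i j, Measurable fun ω => ε ω i j)
    (hindep : iIndepFun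
      (Sum.elim (fun q : Fin d × Fin n => fun ω => X ω q.1 q.2)
        (Sum.elim (fun q : Fin d × Fin d => fun ω => W ω q.1 q.2)
          (fun q : Fin d × Fin n => fun ω => ε ω q.1 q.2))) ℙ)
    (hlawX : ∀ i j, Measure.map (fun ω => X ω i j) ℙ = gaussianReal 0 1)
    (hlawW : ∀ i j, Measure.map (fun ω => W ω i j) ℙ = gaussianReal 0 1)
    (hlawε : ∀ i j, Measure.map (fun ω => ε ω i j) ℙ = gaussianReal 0 ⟨σ ^ 2, sq_nonneg σ⟩)
    (Y : Ω → Matrix (Fin d) (Fin n) ℝ) (hY : ∀ ω, Y ω = W ω * X ω + ε ω)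
    (What : Ω → Matrix (Fin d) (Fin d) ℝ)
    (hWhat : ∀ ω, What ω =
      Y ω * (X ω)ᵀ * (X ω * (X ω)ᵀ + σ ^ 2 • (1 : Matrix (Fin d) (Fin d) ℝ))⁻¹)
    (lam : Fin d → ℝ)
    (hden : ∀ i : Fin d, (∫ ω, Y ω i ⬝ᵥ (((X ω)ᵀ * X ω) *ᵥ Y ω i)) ≠ 0)
    (hlam : ∀ i : Fin d, lam i =
      (∫ ω, What ω i ⬝ᵥ (X ω *ᵥ Y ω i)) / (∫ ω, Y ω i ⬝ᵥ (((X ω)ᵀ * X ω) *ᵥ Y ω i)))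
    :
    ∀ i : Fin d,
      (Matrix.of fun k l => ∫ ω,
          (lam i * ((X ω *ᵥ Y ω i) k * (X ω *ᵥ Y ω i) l)
            - (X ω *ᵥ Y ω i) k * What ω i l))
        = (0 : Matrix (Fin d) (Fin d) ℝ) :=
  stmt_5_general d n σ Ω X W ε hmX hmW hmε hindep hlawX hlawW hlawε Y hY What hWhat lam hden hlam
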